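/- Let X be an F^n-directional quasi-Banach function space over Ω, and let E ⊆ Ω with 0 < μ(E) < ∞. If for every u ∈ F^n one has 1_E u ∈ X, and there is C > 0 such that for every u ∈ F^n there exists a nonzero v ∈ F^n with 1_E v ∈ X' and μ(E)^{-1}‖1_E u‖_X ‖1_E v‖_{X'} ≤ C|u·v|, then the averaging operator T_E f := (avg_E f) 1_E is bounded on X with norm at most C. -/

import Mathlib

/-!
Pair the average `u = ⨍_E f` with the vector `v` supplied by the hypothesis. Averaging gives
`|⟪u, v⟫| μ(E) ≤ ∫_E |⟪f, v⟫|`, and the Hölder inequality for the Köthe dual bounds this by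
`‖f‖_X ‖1_E v‖_{X'}`. With the hypothesis this yields
`‖T_E f‖_X ‖1_E v‖_{X'} ≤ C ‖f‖_X ‖1_E v‖_{X'}`, and `‖1_E v‖_{X'}` can be cancelled: it is finite
by assumption and nonzero because testing it against a small multiple of `1_E v` itself gives
`‖1_E v‖_{X'} ≥ c ‖v‖² μ(E) > 0`.
-/

open MeasureTheory ENNReal

variable {𝕜 : Type*} [RCLike 𝕜] {n : ℕ}
  [MeasurableSpace (EuclideanSpace 𝕜 (Fin n))] [BorelSpace (EuclideanSpace 𝕜 (Fin n))]
  {Ω : Type*} [MeasurableSpace Ω]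

/-- The Köthe dual (extended-valued) norm of an `𝔽ⁿ`-directional quasi-Banach function space
encoded by its extended norm `eN`. -/
noncomputable def dirDualNorm (μ : Measure Ω) (eN : (Ω → EuclideanSpace 𝕜 (Fin n)) → ℝ≥0∞)
    (g : Ω → EuclideanSpace 𝕜 (Fin n)) : ℝ≥0∞ :=
  ⨆ f ∈ {f : Ω → EuclideanSpace 𝕜 (Fin n) | Measurable f ∧ eN f ≤ 1},
    ∫⁻ x, (‖(inner 𝕜 (f x) (g x) : 𝕜)‖₊ : ℝ≥0∞) ∂μ

/-- The averaging operator `T_E f := (⨍_E f dμ) 1_E`. -/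
noncomputable def avgOp (μ : Measure Ω) (E : Set Ω) (f : Ω → EuclideanSpace 𝕜 (Fin n)) :
    Ω → EuclideanSpace 𝕜 (Fin n) :=
  E.indicator fun _ => ⨍ x in E, f x ∂μ

theorem ENNReal.le_mul_of_forall_coe_mul_le {a b d : ℝ≥0∞} (ha : a ≠ ⊤) (hd : d ≠ ⊤)
    (h : ∀ t : NNReal, (t : ℝ≥0∞) * a ≤ 1 → (t : ℝ≥0∞) * b ≤ d) : b ≤ a * d := by
  rcases eq_or_ne a 0 with rfl | ha0
  · suffices b = 0 by simp [this]
    by_contra hb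
    have : ⊤ * b ≤ d := by
      rw [← ENNReal.iSup_natCast, ENNReal.iSup_mul]
      exact iSup_le fun m => by exact_mod_cast h m (by simp)
    exact hd (top_le_iff.mp (by rwa [ENNReal.top_mul hb] at this))
  · have hinv : ((a.toNNReal⁻¹ : NNReal) : ℝ≥0∞) = a⁻¹ := by
      rw [ENNReal.coe_inv (by simpa [ENNReal.toNNReal_eq_zero_iff, ha] using ha0),
        ENNReal.coe_toNNReal ha]
    have := h a.toNNReal⁻¹ (by rw [hinv, ENNReal.inv_mul_cancel ha0 ha])
    rwa [hinv, ENNReal.inv_mul_le_iff ha0 ha] at this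

theorem enorm_inner_setAverage_mul_le {𝕜 F α : Type*} [RCLike 𝕜] [NormedAddCommGroup F]
    [InnerProductSpace 𝕜 F] [CompleteSpace F] [NormedSpace ℝ F] [IsScalarTower ℝ 𝕜 F]
    [MeasurableSpace α]
    {μ : Measure α} {s : Set α} (hs : μ s ≠ ⊤) (f : α → F) (v : F) :
    ‖(inner 𝕜 (⨍ x in s, f x ∂μ) v : 𝕜)‖ₑ * μ s ≤ ∫⁻ x in s, ‖(inner 𝕜 (f x) v : 𝕜)‖ₑ ∂μ := by
  by_cases hf : IntegrableOn f s μ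
  · calc ‖(inner 𝕜 (⨍ x in s, f x ∂μ) v : 𝕜)‖ₑ * μ s
        = ‖(inner 𝕜 v (μ.real s • ⨍ x in s, f x ∂μ) : 𝕜)‖ₑ := by
          rw [RCLike.real_smul_eq_coe_smul (K := 𝕜), inner_smul_right, enorm_mul, mul_comm,
            ← ofReal_norm, ← ofReal_norm, RCLike.norm_ofReal, norm_inner_symm, measureReal_def,
            abs_toReal, ofReal_toReal hs, ofReal_norm]
      _ = ‖∫ x in s, (inner 𝕜 v (f x) : 𝕜) ∂μ‖ₑ := by
          rw [measure_smul_setAverage f hs, integral_inner hf]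
      _ ≤ ∫⁻ x in s, ‖(inner 𝕜 v (f x) : 𝕜)‖ₑ ∂μ := enorm_integral_le_lintegral_enorm _
      _ = ∫⁻ x in s, ‖(inner 𝕜 (f x) v : 𝕜)‖ₑ ∂μ := by
          simp only [← ofReal_norm, norm_inner_symm]
  · simp [setAverage_eq, integral_undef hf]

theorem lintegral_inner_indicator_const {𝕜 F α : Type*} [RCLike 𝕜] [NormedAddCommGroup F]
    [InnerProductSpace 𝕜 F] [MeasurableSpace α] {μ : Measure α} {E : Set α}
    (hE : MeasurableSet E) (f : α → F) (v : F) :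
    ∫⁻ x, (‖(inner 𝕜 (f x) (E.indicator (fun _ => v) x) : 𝕜)‖₊ : ℝ≥0∞) ∂μ =
      ∫⁻ x in E, (‖(inner 𝕜 (f x) v : 𝕜)‖₊ : ℝ≥0∞) ∂μ := by
  rw [← lintegral_indicator hE]
  congr 1 with x
  by_cases hx : x ∈ E <;> simp [hx]

section KotheDual

variable {μ : Measure Ω} {eN : (Ω → EuclideanSpace 𝕜 (Fin n)) → ℝ≥0∞}
  {f g : Ω → EuclideanSpace 𝕜 (Fin n)}

theorem coe_mul_lintegral_le_dirDualNorm
    (hhomog : ∀ (c : 𝕜) (f : Ω → EuclideanSpace 𝕜 (Fin n)),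
      eN (fun x => c • f x) = ‖c‖₊ * eN f)
    (hf : Measurable f) {t : NNReal} (ht : (t : ℝ≥0∞) * eN f ≤ 1) :
    (t : ℝ≥0∞) * ∫⁻ x, (‖(inner 𝕜 (f x) (g x) : 𝕜)‖₊ : ℝ≥0∞) ∂μ ≤ dirDualNorm μ eN g := by
  set c : 𝕜 := ((t : ℝ) : 𝕜)
  have hc : ‖c‖₊ = t := by ext; simp [c]
  have hcf : (fun x => c • f x) ∈ {f | Measurable f ∧ eN f ≤ 1} :=
    ⟨hf.const_smul c, by rwa [hhomog, hc]⟩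
  refine le_trans (le_of_eq ?_) (le_iSup₂ (f := fun f (_ : f ∈ {f | Measurable f ∧ eN f ≤ 1}) =>
    ∫⁻ x, (‖(inner 𝕜 (f x) (g x) : 𝕜)‖₊ : ℝ≥0∞) ∂μ) _ hcf)
  rw [← lintegral_const_mul' _ _ ENNReal.coe_ne_top]
  simp only [inner_smul_left, nnnorm_mul, RCLike.nnnorm_conj, hc, ENNReal.coe_mul]

theorem lintegral_le_mul_dirDualNorm
    (hhomog : ∀ (c : 𝕜) (f : Ω → EuclideanSpace 𝕜 (Fin n)),
      eN (fun x => c • f x) = ‖c‖₊ * eN f)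
    (hf : Measurable f) (hD0 : dirDualNorm μ eN g ≠ 0) (hD : dirDualNorm μ eN g ≠ ⊤) :
    ∫⁻ x, (‖(inner 𝕜 (f x) (g x) : 𝕜)‖₊ : ℝ≥0∞) ∂μ ≤ eN f * dirDualNorm μ eN g := by
  rcases eq_or_ne (eN f) ⊤ with hfN | hfN
  · simp [hfN, ENNReal.top_mul hD0]
  · exact ENNReal.le_mul_of_forall_coe_mul_le hfN hD
      fun _ ht => coe_mul_lintegral_le_dirDualNorm hhomog hf ht

theorem dirDualNorm_indicator_const_ne_zero
    (hhomog : ∀ (c : 𝕜) (f : Ω → EuclideanSpace 𝕜 (Fin n)),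
      eN (fun x => c • f x) = ‖c‖₊ * eN f)
    {E : Set Ω} (hE : MeasurableSet E) (hE0 : μ E ≠ 0) {v : EuclideanSpace 𝕜 (Fin n)}
    (hv : v ≠ 0) (hvN : eN (E.indicator fun _ => v) ≠ ⊤) :
    dirDualNorm μ eN (E.indicator fun _ => v) ≠ 0 := by
  intro hD
  have hle := ENNReal.le_mul_of_forall_coe_mul_le hvN (hD ▸ ENNReal.zero_ne_top) fun _ ht =>
    coe_mul_lintegral_le_dirDualNorm (μ := μ) (g := E.indicator fun _ => v) hhomog
      (measurable_const.indicator hE) ht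
  rw [hD, mul_zero, nonpos_iff_eq_zero, lintegral_inner_indicator_const hE,
    setLIntegral_congr_fun hE fun x hx => by rw [Set.indicator_of_mem hx], setLIntegral_const]
    at hle
  simp [hv, hE0] at hle

end KotheDual

theorem stmt11_general (μ : Measure Ω)
    (eN : (Ω → EuclideanSpace 𝕜 (Fin n)) → ℝ≥0∞)
    (hhomog : ∀ (c : 𝕜) (f : Ω → EuclideanSpace 𝕜 (Fin n)),
      eN (fun x => c • f x) = ‖c‖₊ * eN f)
    (E : Set Ω) (hE : MeasurableSet E) (hE0 : 0 < μ E) (hEfin : μ E ≠ ⊤)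
    (C : ℝ)
    (hXmem : ∀ u : EuclideanSpace 𝕜 (Fin n), eN (E.indicator fun _ => u) ≠ ⊤)
    (hdual : ∀ u : EuclideanSpace 𝕜 (Fin n), ∃ v : EuclideanSpace 𝕜 (Fin n), v ≠ 0 ∧
      dirDualNorm μ eN (E.indicator fun _ => v) ≠ ⊤ ∧
      eN (E.indicator fun _ => u) * dirDualNorm μ eN (E.indicator fun _ => v) ≤
        ENNReal.ofReal C * (‖(inner 𝕜 u v : 𝕜)‖₊ : ℝ≥0∞) * μ E) :
    ∀ f : Ω → EuclideanSpace 𝕜 (Fin n), Measurable f →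
      eN (avgOp μ E f) ≤ ENNReal.ofReal C * eN f := by
  intro f hf
  obtain ⟨v, hv0, hDtop, hkey⟩ := hdual (⨍ x in E, f x ∂μ)
  have hD0 := dirDualNorm_indicator_const_ne_zero hhomog hE hE0.ne' hv0 (hXmem v)
  have hHolder := lintegral_le_mul_dirDualNorm hhomog hf hD0 hDtop
  rw [lintegral_inner_indicator_const hE] at hHolder
  refine (ENNReal.mul_le_mul_iff_left hD0 hDtop).mp ?_
  calc eN (avgOp μ E f) * dirDualNorm μ eN (E.indicator fun _ => v)
      ≤ ENNReal.ofReal C * ((‖(inner 𝕜 (⨍ x in E, f x ∂μ) v : 𝕜)‖₊ : ℝ≥0∞) * μ E) := by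
        rw [← mul_assoc]; exact hkey
    _ ≤ ENNReal.ofReal C * ∫⁻ x in E, (‖(inner 𝕜 (f x) v : 𝕜)‖₊ : ℝ≥0∞) ∂μ := by
        gcongr
        simpa only [enorm_eq_nnnorm] using enorm_inner_setAverage_mul_le hEfin f v
    _ ≤ ENNReal.ofReal C * eN f * dirDualNorm μ eN (E.indicator fun _ => v) := by
        rw [mul_assoc]; gcongr

/-- Let `X` be an `𝔽ⁿ`-directional quasi-Banach function space over `Ω`
(encoded by its extended norm `eN` with the directional ideal property and homogeneity), and
let `E ⊆ Ω` with `0 < μ(E) < ∞`.  If `1_E u ∈ X` for every `u ∈ 𝔽ⁿ`, and there is `C > 0` such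
that for every `u ∈ 𝔽ⁿ` there exists a nonzero `v ∈ 𝔽ⁿ` with `1_E v ∈ X'` and
`‖1_E u‖_X ‖1_E v‖_{X'} ≤ C |u·v| μ(E)`, then the averaging operator `T_E` is bounded on `X`
with norm at most `C`. -/
theorem stmt11 (μ : Measure Ω) [SigmaFinite μ]
    (eN : (Ω → EuclideanSpace 𝕜 (Fin n)) → ℝ≥0∞)
    (hideal : ∀ (h : Ω → 𝕜) (f : Ω → EuclideanSpace 𝕜 (Fin n)),
      Measurable h → (∀ x, ‖h x‖ ≤ 1) → eN (fun x => h x • f x) ≤ eN f)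
    (hhomog : ∀ (c : 𝕜) (f : Ω → EuclideanSpace 𝕜 (Fin n)),
      eN (fun x => c • f x) = ‖c‖₊ * eN f)
    (E : Set Ω) (hE : MeasurableSet E) (hE0 : 0 < μ E) (hEfin : μ E ≠ ⊤)
    (C : ℝ) (hC : 0 < C)
    (hXmem : ∀ u : EuclideanSpace 𝕜 (Fin n), eN (E.indicator fun _ => u) ≠ ⊤)
    (hdual : ∀ u : EuclideanSpace 𝕜 (Fin n), ∃ v : EuclideanSpace 𝕜 (Fin n), v ≠ 0 ∧
      dirDualNorm μ eN (E.indicator fun _ => v) ≠ ⊤ ∧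
      eN (E.indicator fun _ => u) * dirDualNorm μ eN (E.indicator fun _ => v) ≤
        ENNReal.ofReal C * (‖(inner 𝕜 u v : 𝕜)‖₊ : ℝ≥0∞) * μ E) :
    ∀ f : Ω → EuclideanSpace 𝕜 (Fin n), Measurable f →
      eN (avgOp μ E f) ≤ ENNReal.ofReal C * eN f :=
  stmt11_general μ eN hhomog E hE hE0 hEfin C hXmem hdual
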